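/- arXiv:2309.16945 — 3 statements merged into one kernel-verified Lean document; each statement's English description precedes it below -/
import Mathlib

section
/- Let b₀, b₁ : [0,∞) → ℝ be continuously differentiable, γ₁ a class-K function, and suppose b₁(t) = b₀'(t) + γ₁(b₀(t)) for all t ≥ 0. If b₁(t) ≥ 0 for all t ≥ 0 and b₀(0) ≥ 0, then b₀(t) ≥ 0 for all t ≥ 0. -/
/-- Fence `f` from below by the constant `-ε < 0`: wherever `f` touches the fence, `f' > 0`,
which is the strict inequality the fencing theorem asks for; then let `ε → 0`. -/
theorem nonneg_of_deriv_pos_of_neg {f f' : ℝ → ℝ} {a : ℝ}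
    (hf : ∀ x ≥ a, HasDerivAt f (f' x) x) (ha : 0 ≤ f a)
    (hpos : ∀ x ≥ a, f x < 0 → 0 < f' x) :
    ∀ x ≥ a, 0 ≤ f x := by
  intro x hx
  refine le_of_forall_pos_le_add fun ε hε => ?_
  have hfence : -ε ≤ f x :=
    image_le_of_deriv_right_lt_deriv_boundary' (f := fun _ => -ε) (f' := fun _ => 0)
      continuousOn_const (fun _ _ => hasDerivWithinAt_const _ _ _) (by linarith)
      (fun y hy => (hf y hy.1).continuousAt.continuousWithinAt)
      (fun y hy => (hf y hy.1).hasDerivWithinAt)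
      (fun y hy _ => hpos y hy.1 (by linarith)) ⟨hx, le_rfl⟩
  linarith

theorem stmt_11_general (b0 b0' b1 : ℝ → ℝ) (γ1 : ℝ → ℝ)
    (hderiv : ∀ t ≥ (0:ℝ), HasDerivAt b0 (b0' t) t)
    (hγmono : StrictMono γ1) (hγ0 : γ1 0 = 0)
    (hrec : ∀ t ≥ (0:ℝ), b1 t = b0' t + γ1 (b0 t))
    (hb1 : ∀ t ≥ (0:ℝ), b1 t ≥ 0)
    (h0 : b0 0 ≥ 0) :
    ∀ t ≥ (0:ℝ), b0 t ≥ 0 := by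
  refine nonneg_of_deriv_pos_of_neg hderiv h0 fun t ht hneg => ?_
  have hγneg : γ1 (b0 t) < 0 := hγ0 ▸ hγmono hneg
  linarith [hrec t ht, hb1 t ht]

theorem stmt_11 (b0 b0' b1 : ℝ → ℝ) (γ1 : ℝ → ℝ)
    (hderiv : ∀ t ≥ (0:ℝ), HasDerivAt b0 (b0' t) t)
    (hcont : ContinuousOn b0' (Set.Ici 0))
    (hγcont : Continuous γ1) (hγmono : StrictMono γ1) (hγ0 : γ1 0 = 0)
    (hrec : ∀ t ≥ (0:ℝ), b1 t = b0' t + γ1 (b0 t))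
    (hb1 : ∀ t ≥ (0:ℝ), b1 t ≥ 0)
    (h0 : b0 0 ≥ 0) :
    ∀ t ≥ (0:ℝ), b0 t ≥ 0 :=
  stmt_11_general b0 b0' b1 γ1 hderiv hγmono hγ0 hrec hb1 h0
end

section
/- Let b₀, b₁, ..., b_m : [0,∞) → ℝ be continuously differentiable functions and γ₁,...,γ_m class-K functions with b_i(t) = b_{i-1}'(t) + γ_i(b_{i-1}(t)) for all i ∈ {1,...,m} and t ≥ 0. If b_m(t) ≥ 0 for all t ≥ 0 and b_i(0) ≥ 0 for all i ∈ {0,...,m-1}, then b_i(t) ≥ 0 for every i ∈ {0,...,m} and all t ≥ 0. -/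
/-!
Downward induction on `i`: once `b (i + 1) ≥ 0` is known, the recursion gives the barrier
inequality `b' i + γ (i + 1) (b i) ≥ 0`. As long as `b i` stays above a level `-ε < 0`, touching
that level forces `b' i ≥ -γ (i + 1) (-ε) > 0`, so by the fencing theorem `b i` can never cross
it; letting `ε → 0` gives `b i ≥ 0`.
-/

open Set

theorem nonneg_of_hasDerivAt_add_nonneg {f f' g : ℝ → ℝ} {a : ℝ}
    (hf : ∀ t ≥ a, HasDerivAt f (f' t) t) (hg : ∀ x < 0, g x < 0)
    (hbarrier : ∀ t ≥ a, 0 ≤ f' t + g (f t)) (ha : 0 ≤ f a) :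
    ∀ t ≥ a, 0 ≤ f t := by
  intro t ht
  refine le_of_forall_pos_le_add fun ε hε => ?_
  have hfence : ∀ ⦃x⦄, x ∈ Icc a t → -ε ≤ f x :=
    image_le_of_deriv_right_lt_deriv_boundary' continuousOn_const
      (fun x _ => hasDerivWithinAt_const x _ (-ε)) (by linarith)
      (fun x hx => (hf x hx.1).continuousAt.continuousWithinAt)
      (fun x hx => (hf x hx.1).hasDerivWithinAt)
      (fun x hx hfx => by
        have hg_fx : g (f x) < 0 := hfx ▸ hg (-ε) (neg_neg_of_pos hε)
        linarith [hbarrier x hx.1])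
  linarith [hfence (right_mem_Icc.2 ht)]

theorem stmt_12_general (m : ℕ) (b b' : ℕ → ℝ → ℝ) (γ : ℕ → ℝ → ℝ)
    (hderiv : ∀ i ≤ m, ∀ t ≥ (0:ℝ), HasDerivAt (b i) (b' i t) t)
    (hγ : ∀ i, 1 ≤ i → i ≤ m →
      Continuous (γ i) ∧ StrictMono (γ i) ∧ γ i 0 = 0)
    (hrec : ∀ i, 1 ≤ i → i ≤ m → ∀ t ≥ (0:ℝ),
      b i t = b' (i - 1) t + γ i (b (i - 1) t))
    (hbm : ∀ t ≥ (0:ℝ), b m t ≥ 0)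
    (h0 : ∀ i < m, b i 0 ≥ 0) :
    ∀ i ≤ m, ∀ t ≥ (0:ℝ), b i t ≥ 0 := by
  intro i hi
  induction hi using Nat.decreasingInduction with
  | self => exact hbm
  | of_succ i him hsucc =>
    obtain ⟨-, hmono, hγ0⟩ := hγ (i + 1) (Nat.le_add_left 1 i) him
    refine nonneg_of_hasDerivAt_add_nonneg (hderiv i him.le)
      (fun x hx => hγ0 ▸ hmono hx) (fun t ht => ?_) (h0 i him)
    have hstep := hrec (i + 1) (Nat.le_add_left 1 i) him t ht
    rw [Nat.add_sub_cancel] at hstep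
    exact hstep ▸ hsucc t ht

theorem stmt_12 (m : ℕ) (b b' : ℕ → ℝ → ℝ) (γ : ℕ → ℝ → ℝ)
    (hderiv : ∀ i ≤ m, ∀ t ≥ (0:ℝ), HasDerivAt (b i) (b' i t) t)
    (hcont : ∀ i ≤ m, ContinuousOn (b' i) (Set.Ici 0))
    (hγ : ∀ i, 1 ≤ i → i ≤ m →
      Continuous (γ i) ∧ StrictMono (γ i) ∧ γ i 0 = 0)
    (hrec : ∀ i, 1 ≤ i → i ≤ m → ∀ t ≥ (0:ℝ),
      b i t = b' (i - 1) t + γ i (b (i - 1) t))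
    (hbm : ∀ t ≥ (0:ℝ), b m t ≥ 0)
    (h0 : ∀ i < m, b i 0 ≥ 0) :
    ∀ i ≤ m, ∀ t ≥ (0:ℝ), b i t ≥ 0 :=
  stmt_12_general m b b' γ hderiv hγ hrec hbm h0
end

section
/- Let h : ℝ^{n} × ℝ^{m} → ℝ be continuously differentiable, and let (x(t), u(t)) solve ẋ = F(x,u) + ℓ(x)d(t), u̇ = φ(x,u) + v(t). If for all t, (∂h/∂x)(F + ℓ d̂) + (∂h/∂u)(φ + v) + γ(h) ≥ ‖(∂h/∂x)ℓ‖·C(t) where ‖d̂(t) - d(t)‖ ≤ C(t) and γ is class-K, then ḣ(t) + γ(h(t)) ≥ 0 along the trajectory, and hence if h(x(0),u(0)) ≥ 0 then h(x(t),u(t)) ≥ 0 for all t ≥ 0. -/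
open Set

/-- Take the last time `s₀ ≤ b` at which `η ≥ 0`; if `η b < 0`, then `η < 0` on `(s₀, b)`,
so `η` is monotone on `[s₀, b]` and `η b ≥ η s₀ ≥ 0`. -/
theorem nonneg_of_deriv_nonneg_of_neg {η : ℝ → ℝ} {a b : ℝ} (hab : a ≤ b)
    (hη : Differentiable ℝ η) (hneg : ∀ t ∈ Ioo a b, η t < 0 → 0 ≤ deriv η t)
    (ha : 0 ≤ η a) : 0 ≤ η b := by
  by_contra! hb
  set S := Icc a b ∩ η ⁻¹' Ici 0
  have hS : IsCompact S := isCompact_Icc.inter_right (isClosed_Ici.preimage hη.continuous)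
  obtain ⟨s₀, ⟨⟨has₀, hs₀b⟩, hηs₀⟩, hs₀max⟩ := hS.exists_isGreatest ⟨a, ⟨le_rfl, hab⟩, ha⟩
  have hneg_after : ∀ t ∈ Ioo s₀ b, η t < 0 := fun t ⟨hs₀t, htb⟩ => by
    by_contra! ht
    exact (hs₀max ⟨⟨has₀.trans hs₀t.le, htb.le⟩, ht⟩).not_gt hs₀t
  have hmono : MonotoneOn η (Icc s₀ b) := by
    refine monotoneOn_of_deriv_nonneg (convex_Icc s₀ b) hη.continuous.continuousOn
      hη.differentiableOn fun t ht => ?_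
    rw [interior_Icc] at ht
    exact hneg t ⟨has₀.trans_lt ht.1, ht.2⟩ (hneg_after t ht)
  have hle : η s₀ ≤ η b := hmono ⟨le_rfl, hs₀b⟩ ⟨hs₀b, le_rfl⟩ hs₀b
  exact hb.not_ge (le_trans hηs₀ hle)

theorem ContinuousLinearMap.apply_sub_opNorm_mul_le_of_norm_sub_le
    {E F P : Type*} [NormedAddCommGroup E] [NormedSpace ℝ E] [NormedAddCommGroup F]
    [NormedSpace ℝ F] [NormedAddCommGroup P] [NormedSpace ℝ P]
    (D : E × F →L[ℝ] ℝ) (L : P →L[ℝ] E) (e : E) (f : F) {d dhat : P} {c : ℝ}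
    (hd : ‖dhat - d‖ ≤ c) :
    D (e + L dhat, f) - ‖D.comp ((ContinuousLinearMap.inl ℝ E F).comp L)‖ * c
      ≤ D (e + L d, f) := by
  set K := D.comp ((ContinuousLinearMap.inl ℝ E F).comp L)
  have hsplit : D (e + L dhat, f) - D (e + L d, f) = K (dhat - d) := by
    rw [← map_sub, show K (dhat - d) = D (L (dhat - d), 0) from rfl]
    congr 1
    ext <;> simp
  have hK : K (dhat - d) ≤ ‖K‖ * c :=
    (le_abs_self _).trans ((K.le_opNorm _).trans (mul_le_mul_of_nonneg_left hd (norm_nonneg _)))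
  linarith

theorem stmt_14_general (n m p : ℕ)
    (h : EuclideanSpace ℝ (Fin n) × EuclideanSpace ℝ (Fin m) → ℝ)
    (hh : ContDiff ℝ 1 h)
    (Fdyn : EuclideanSpace ℝ (Fin n) → EuclideanSpace ℝ (Fin m) → EuclideanSpace ℝ (Fin n))
    (ℓ : EuclideanSpace ℝ (Fin n) → (EuclideanSpace ℝ (Fin p) →L[ℝ] EuclideanSpace ℝ (Fin n)))
    (φ : EuclideanSpace ℝ (Fin n) → EuclideanSpace ℝ (Fin m) → EuclideanSpace ℝ (Fin m))
    (d dhat : ℝ → EuclideanSpace ℝ (Fin p)) (v : ℝ → EuclideanSpace ℝ (Fin m))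
    (C : ℝ → ℝ) (γ : ℝ → ℝ)
    (hγmono : StrictMono γ) (hγ0 : γ 0 = 0)
    (x : ℝ → EuclideanSpace ℝ (Fin n)) (u : ℝ → EuclideanSpace ℝ (Fin m))
    (hx : ∀ t, HasDerivAt x (Fdyn (x t) (u t) + ℓ (x t) (d t)) t)
    (hu : ∀ t, HasDerivAt u (φ (x t) (u t) + v t) t)
    (hbound : ∀ t, ‖dhat t - d t‖ ≤ C t)
    (hmain : ∀ t,
      fderiv ℝ h (x t, u t)
          (Fdyn (x t) (u t) + ℓ (x t) (dhat t), φ (x t) (u t) + v t)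
        + γ (h (x t, u t))
      ≥ ‖(fderiv ℝ h (x t, u t)).comp
          ((ContinuousLinearMap.inl ℝ (EuclideanSpace ℝ (Fin n))
            (EuclideanSpace ℝ (Fin m))).comp (ℓ (x t)))‖ * C t) :
    (∀ t ≥ (0:ℝ), deriv (fun s => h (x s, u s)) t + γ (h (x t, u t)) ≥ 0) ∧
    (h (x 0, u 0) ≥ 0 → ∀ t ≥ (0:ℝ), h (x t, u t) ≥ 0) := by
  set η : ℝ → ℝ := fun s => h (x s, u s)
  have hη : ∀ t, HasDerivAt η
      (fderiv ℝ h (x t, u t) (Fdyn (x t) (u t) + ℓ (x t) (d t), φ (x t) (u t) + v t)) t :=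
    fun t => ((hh.differentiable one_ne_zero) _).hasFDerivAt.comp_hasDerivAt t
      ((hx t).prodMk (hu t))
  have hcbf : ∀ t, deriv η t + γ (η t) ≥ 0 := fun t => by
    rw [(hη t).deriv]
    linarith [hmain t, (fderiv ℝ h (x t, u t)).apply_sub_opNorm_mul_le_of_norm_sub_le (ℓ (x t))
      (Fdyn (x t) (u t)) (φ (x t) (u t) + v t) (hbound t)]
  refine ⟨fun t _ => hcbf t, fun h0 t ht => ?_⟩
  refine nonneg_of_deriv_nonneg_of_neg ht (fun s => (hη s).differentiableAt) (fun s _ hs => ?_) h0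
  have hγneg : γ (η s) ≤ 0 := hγ0 ▸ hγmono.monotone hs.le
  linarith [hcbf s]

theorem stmt_14 (n m p : ℕ)
    (h : EuclideanSpace ℝ (Fin n) × EuclideanSpace ℝ (Fin m) → ℝ)
    (hh : ContDiff ℝ 1 h)
    (Fdyn : EuclideanSpace ℝ (Fin n) → EuclideanSpace ℝ (Fin m) → EuclideanSpace ℝ (Fin n))
    (ℓ : EuclideanSpace ℝ (Fin n) → (EuclideanSpace ℝ (Fin p) →L[ℝ] EuclideanSpace ℝ (Fin n)))
    (φ : EuclideanSpace ℝ (Fin n) → EuclideanSpace ℝ (Fin m) → EuclideanSpace ℝ (Fin m))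
    (d dhat : ℝ → EuclideanSpace ℝ (Fin p)) (v : ℝ → EuclideanSpace ℝ (Fin m))
    (C : ℝ → ℝ) (γ : ℝ → ℝ)
    (hγcont : Continuous γ) (hγmono : StrictMono γ) (hγ0 : γ 0 = 0)
    (x : ℝ → EuclideanSpace ℝ (Fin n)) (u : ℝ → EuclideanSpace ℝ (Fin m))
    (hx : ∀ t, HasDerivAt x (Fdyn (x t) (u t) + ℓ (x t) (d t)) t)
    (hu : ∀ t, HasDerivAt u (φ (x t) (u t) + v t) t)
    (hxc : Continuous x) (huc : Continuous u) (hdc : Continuous d)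
    (hvc : Continuous v)
    (hbound : ∀ t, ‖dhat t - d t‖ ≤ C t)
    (hmain : ∀ t,
      fderiv ℝ h (x t, u t)
          (Fdyn (x t) (u t) + ℓ (x t) (dhat t), φ (x t) (u t) + v t)
        + γ (h (x t, u t))
      ≥ ‖(fderiv ℝ h (x t, u t)).comp
          ((ContinuousLinearMap.inl ℝ (EuclideanSpace ℝ (Fin n))
            (EuclideanSpace ℝ (Fin m))).comp (ℓ (x t)))‖ * C t) :
    (∀ t ≥ (0:ℝ), deriv (fun s => h (x s, u s)) t + γ (h (x t, u t)) ≥ 0) ∧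
    (h (x 0, u 0) ≥ 0 → ∀ t ≥ (0:ℝ), h (x t, u t) ≥ 0) :=
  stmt_14_general n m p h hh Fdyn ℓ φ d dhat v C γ hγmono hγ0 x u hx hu hbound hmain
end
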